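/- Let n, p be positive integers and let q be a (not necessarily homogeneous) polynomial of degree m on ℂⁿ. Then the restriction of q to Ŝ_p is a finite sum of spherical polyharmonics of order p and degrees at most m. -/

import Mathlib

/-! With respect to the Fischer inner product `⟨f, g⟩ = ∑ₛ s! fₛ conj(gₛ)`, multiplication by `Xⱼ`
is adjoint to `∂ⱼ`, so multiplication by `|x|^{2p}` is adjoint to `Δ^p`. Hence
`g ↦ Δ^p(|x|^{2p} g)` is injective, so bijective, on the finite-dimensional space of homogeneous
polynomials of degree `d`, and every homogeneous `f` of degree `d + 2p` splits as
`f = h + |x|^{2p} g` with `Δ^p h = 0` and `g` homogeneous of degree `d` (Fischer decomposition).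
On the `k`-th sphere of `Ŝ_p` we have `|z|² = e^{2kπi/p}`, so `|z|^{2p} = 1` and `f` agrees with
`h + g` there; induction on the degree, applied to each homogeneous component of `q`, concludes. -/

open MeasureTheory Complex Filter Finset Metric
open scoped ENNReal Topology

noncomputable section

/-- `ℂⁿ` -/
abbrev Cn (n : ℕ) := Fin n → ℂ

/-- `ℝⁿ` with the euclidean norm -/
abbrev Rn (n : ℕ) := EuclideanSpace ℝ (Fin n)

/-- embedding of `ℝⁿ` into `ℂⁿ` -/
def toC {n : ℕ} (x : Rn n) : Cn n := fun j => (x j : ℂ)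

/-- `|z|² = ∑ zⱼ²`, the complex-bilinear extension of the squared euclidean norm -/
def cnsq {n : ℕ} (z : Cn n) : ℂ := ∑ j, (z j) ^ 2

/-- the bilinear dot product `z ⬝ w = ∑ zⱼ wⱼ` -/
def cdot {n : ℕ} (z w : Cn n) : ℂ := ∑ j, z j * w j

/-- componentwise complex conjugation -/
def conjC {n : ℕ} (z : Cn n) : Cn n := fun j => (starRingEnd ℂ) (z j)

/-- the hermitian norm `‖z‖ = (∑ |zⱼ|²)^(1/2)` on `ℂⁿ` -/
def hnorm {n : ℕ} (z : Cn n) : ℝ := Real.sqrt (∑ j, ‖z j‖ ^ 2)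

/-- the principal square root `|z| = (∑ zⱼ²)^(1/2)`, complex extension of the euclidean norm -/
def cnorm {n : ℕ} (z : Cn n) : ℂ := cnsq z ^ ((1 : ℂ)/2)

/-- `Ŝ_p = ⋃_{k<p} e^{kπi/p} S`, union of rotated unit spheres -/
def Shat (n p : ℕ) : Set (Cn n) :=
  {z | ∃ k < p, ∃ x : Rn n, ‖x‖ = 1 ∧ z = Complex.exp (k * Real.pi * Complex.I / p) • toC x}

/-- `B̂_p = ⋃_{k<p} e^{kπi/p} B`, union of rotated open unit balls -/
def Bhat (n p : ℕ) : Set (Cn n) :=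
  {z | ∃ k < p, ∃ x : Rn n, ‖x‖ < 1 ∧ z = Complex.exp (k * Real.pi * Complex.I / p) • toC x}

/-- the complexified Laplacian on polynomials, `Δ = ∑ ∂²/∂xⱼ²` -/
def lapP (n : ℕ) : MvPolynomial (Fin n) ℂ →ₗ[ℂ] MvPolynomial (Fin n) ℂ :=
  ∑ j : Fin n, ((MvPolynomial.pderiv j).toLinearMap ∘ₗ (MvPolynomial.pderiv j).toLinearMap)

/-- the polynomial `|x|² = ∑ xⱼ²` -/
def nsqPoly (n : ℕ) : MvPolynomial (Fin n) ℂ := ∑ j : Fin n, (MvPolynomial.X j) ^ 2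

/-- `ℋ_m^p(ℂⁿ)`: homogeneous polynomials of degree `m` that are polyharmonic of order `p` -/
def Hmp (n m p : ℕ) : Submodule ℂ (MvPolynomial (Fin n) ℂ) :=
  MvPolynomial.homogeneousSubmodule (Fin n) ℂ m ⊓ LinearMap.ker ((lapP n) ^ p)

/-- the normalised surface-area measure `σ` on the unit sphere `S ⊂ ℝⁿ` -/
def sphMeasure (n : ℕ) : Measure (sphere (0 : Rn n) 1) :=
  ((volume : Measure (Rn n)).toSphere Set.univ)⁻¹ • (volume : Measure (Rn n)).toSphere

/-- the inner product `⟨f,g⟩_{Ŝ_p} = (1/p) ∫_S ∑_j f(e^{jπi/p}ζ) conj(g(e^{jπi/p}ζ)) dσ(ζ)` -/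
def innerShat (n p : ℕ) (f g : Cn n → ℂ) : ℂ :=
  (p : ℂ)⁻¹ * ∫ ζ : sphere (0 : Rn n) 1, ∑ j ∈ Finset.range p,
      f (Complex.exp (j * Real.pi * Complex.I / p) • toC (ζ : Rn n)) *
        (starRingEnd ℂ) (g (Complex.exp (j * Real.pi * Complex.I / p) • toC (ζ : Rn n)))
    ∂(sphMeasure n)

/-- the measure on `ℂⁿ` representing `L²(Ŝ_p)`: the average of the `p` rotated copies of `σ` -/
def muShat (n p : ℕ) : Measure (Cn n) :=
  (p : ℝ≥0∞)⁻¹ • ∑ j ∈ Finset.range p,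
    Measure.map (fun ζ : sphere (0 : Rn n) 1 =>
      Complex.exp (j * Real.pi * Complex.I / p) • toC (ζ : Rn n)) (sphMeasure n)

/-- the Poisson kernel `P_p(x,ζ) = (1-|x|^{2p})/(x²ζ̄² - 2x⬝ζ̄ + 1)^{n/2}` for `B̂_p` -/
def PoissonK (n p : ℕ) (x ζ : Cn n) : ℂ :=
  (1 - (cnsq x) ^ p) / (cnsq x * cnsq (conjC ζ) - 2 * cdot x (conjC ζ) + 1) ^ ((n : ℂ)/2)

/-- the Poisson integral `P_p[f](x) = ⟨f, P_p(·,x)⟩_{Ŝ_p}` -/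
def PInt (n p : ℕ) (f : Cn n → ℂ) (x : Cn n) : ℂ :=
  innerShat n p f (fun ζ => PoissonK n p ζ x)

/-- the complexified Laplacian, through the real parametrisation of a rotated ball -/
def lapRe (n : ℕ) (g : Rn n → ℂ) : Rn n → ℂ := fun y =>
  ∑ j : Fin n, fderiv ℝ (fun z => fderiv ℝ g z (EuclideanSpace.single j 1)) y
    (EuclideanSpace.single j 1)

/-- the `L`-functional: `L(z) = sqrt(‖z‖² + sqrt(‖z‖⁴ - |z²|²))` -/
def Lnorm {n : ℕ} (z : Cn n) : ℝ :=
  Real.sqrt (hnorm z ^ 2 + Real.sqrt (hnorm z ^ 4 - ‖cnsq z‖ ^ 2))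

/-- the Lie ball `LB` -/
def LBall (n : ℕ) : Set (Cn n) := {z | Lnorm z < 1}

/-- the Lie sphere `LS` -/
def LSphere (n : ℕ) : Set (Cn n) :=
  {z | ∃ φ : ℝ, ∃ x : Rn n, ‖x‖ = 1 ∧ z = Complex.exp (φ * Complex.I) • toC x}

/-- the Cauchy-Hua kernel `H(z,w) = (w̄²z² - 2w̄⬝z + 1)^{-n/2}` -/
def Hua (n : ℕ) (z w : Cn n) : ℂ :=
  (cnsq (conjC w) * cnsq z - 2 * cdot (conjC w) z + 1) ^ (-(n : ℂ)/2)

/-- the Gegenbauer polynomial `C_m^λ(t)` -/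
def gegen (lam : ℂ) (m : ℕ) (t : ℂ) : ℂ :=
  ∑ k ∈ Finset.range (m / 2 + 1),
    (-1) ^ k * Complex.Gamma ((m : ℂ) + lam - k) /
      ((Nat.factorial k : ℂ) * (Nat.factorial (m - 2 * k) : ℂ) * Complex.Gamma lam) *
      (2 * t) ^ (m - 2 * k)

namespace MvPolynomial

section Homogeneous

variable {σ R : Type*} [CommSemiring R]

lemma pderiv_eq_zero_of_isHomogeneous_zero (i : σ) {f : MvPolynomial σ R}
    (hf : f.IsHomogeneous 0) : pderiv i f = 0 := by
  rw [← totalDegree_zero_iff_isHomogeneous, totalDegree_eq_zero_iff_eq_C] at hf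
  rw [hf, pderiv_C]

instance finiteDimensional_homogeneousSubmodule {K : Type*} [Field K] [Finite σ] (d : ℕ) :
    FiniteDimensional K (homogeneousSubmodule σ K d) :=
  Submodule.finiteDimensional_of_le (S₂ := restrictTotalDegree σ K d) fun _ hf =>
    (mem_restrictTotalDegree _ _ _).mpr ((mem_homogeneousSubmodule _ _).mp hf).totalDegree_le

end Homogeneous

section Fischer

variable {σ 𝕜 : Type*} [Fintype σ] [RCLike 𝕜]

def fischerWeight (s : σ →₀ ℕ) : ℕ := ∏ i, (s i).factorial

lemma fischerWeight_pos (s : σ →₀ ℕ) : 0 < fischerWeight s :=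
  Finset.prod_pos fun i _ => Nat.factorial_pos (s i)

lemma fischerWeight_add_single (s : σ →₀ ℕ) (j : σ) :
    fischerWeight (s + Finsupp.single j 1) = (s j + 1) * fischerWeight s := by
  classical
  simp only [fischerWeight, ← Finset.mul_prod_erase _ _ (Finset.mem_univ j)]
  rw [Finset.prod_congr rfl fun i hi => by
    rw [Finsupp.add_apply, Finsupp.single_eq_of_ne (Finset.ne_of_mem_erase hi), add_zero]]
  simp [Nat.factorial_succ, mul_assoc]

def fischerInner (f g : MvPolynomial σ 𝕜) : 𝕜 :=
  ∑ s ∈ f.support, (fischerWeight s : 𝕜) * coeff s f * starRingEnd 𝕜 (coeff s g)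

lemma fischerInner_eq_sum {f : MvPolynomial σ 𝕜} (g : MvPolynomial σ 𝕜)
    {T : Finset (σ →₀ ℕ)} (hT : f.support ⊆ T) :
    fischerInner f g = ∑ s ∈ T, (fischerWeight s : 𝕜) * coeff s f * starRingEnd 𝕜 (coeff s g) :=
  Finset.sum_subset hT fun s _ hs => by rw [notMem_support_iff.mp hs, mul_zero, zero_mul]

lemma fischerInner_add_left (f f' g : MvPolynomial σ 𝕜) :
    fischerInner (f + f') g = fischerInner f g + fischerInner f' g := by
  classical
  have hT := support_add (p := f) (q := f')
  rw [fischerInner_eq_sum g hT, fischerInner_eq_sum g Finset.subset_union_left,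
    fischerInner_eq_sum g Finset.subset_union_right, ← Finset.sum_add_distrib]
  simp only [coeff_add, mul_add, add_mul]

lemma fischerInner_sum_left {ι : Type*} (T : Finset ι) (f : ι → MvPolynomial σ 𝕜)
    (g : MvPolynomial σ 𝕜) : fischerInner (∑ i ∈ T, f i) g = ∑ i ∈ T, fischerInner (f i) g :=
  map_sum (AddMonoidHom.mk' (fischerInner · g) fun f f' => fischerInner_add_left f f' g) f T

lemma fischerInner_sum_right {ι : Type*} (T : Finset ι) (f : MvPolynomial σ 𝕜)
    (g : ι → MvPolynomial σ 𝕜) : fischerInner f (∑ i ∈ T, g i) = ∑ i ∈ T, fischerInner f (g i) := by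
  simp only [fischerInner, coeff_sum, map_sum, Finset.mul_sum]
  exact Finset.sum_comm

lemma fischerInner_X_mul (j : σ) (f g : MvPolynomial σ 𝕜) :
    fischerInner (X j * f) g = fischerInner f (pderiv j g) := by
  rw [fischerInner, support_X_mul, Finset.sum_map]
  refine Finset.sum_congr rfl fun s _ => ?_
  rw [addLeftEmbedding_apply, coeff_X_mul, coeff_pderiv, add_comm, fischerWeight_add_single]
  simp only [map_mul, map_add, map_natCast, map_one, Nat.cast_mul, Nat.cast_add, Nat.cast_one]
  ring

lemma eq_zero_of_fischerInner_self_eq_zero {f : MvPolynomial σ 𝕜} (h : fischerInner f f = 0) :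
    f = 0 := by
  have hreal : fischerInner f f =
      ((∑ s ∈ f.support, (fischerWeight s : ℝ) * ‖coeff s f‖ ^ 2 : ℝ) : 𝕜) := by
    simp only [fischerInner, mul_assoc, RCLike.mul_conj]
    push_cast
    rfl
  rw [hreal, RCLike.ofReal_eq_zero,
    Finset.sum_eq_zero_iff_of_nonneg fun s _ => by positivity] at h
  refine support_eq_empty.mp (Finset.eq_empty_of_forall_notMem fun s hs => ?_)
  have hw : (0 : ℝ) < fischerWeight s := by exact_mod_cast fischerWeight_pos s
  have := h s hs
  simp_all

end Fischer

end MvPolynomial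

open MvPolynomial

section Laplacian

variable {n : ℕ}

lemma lapP_apply (f : MvPolynomial (Fin n) ℂ) :
    lapP n f = ∑ j, pderiv j (pderiv j f) := by
  simp [lapP]

lemma isHomogeneous_lapP {f : MvPolynomial (Fin n) ℂ} {d : ℕ} (hf : f.IsHomogeneous d) :
    (lapP n f).IsHomogeneous (d - 2) := by
  rw [lapP_apply, ← mem_homogeneousSubmodule]
  exact Submodule.sum_mem _ fun j _ => by
    simpa [Nat.sub_sub] using (hf.pderiv (i := j)).pderiv (i := j)

lemma isHomogeneous_lapP_pow {f : MvPolynomial (Fin n) ℂ} {d : ℕ} (hf : f.IsHomogeneous d)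
    (p : ℕ) : ((lapP n ^ p) f).IsHomogeneous (d - 2 * p) := by
  induction p generalizing f d with
  | zero => simpa using hf
  | succ p ih =>
    rw [pow_succ, Module.End.mul_apply]
    simpa [Nat.sub_sub, mul_add, add_comm] using ih (isHomogeneous_lapP hf)

lemma lapP_eq_zero_of_isHomogeneous {f : MvPolynomial (Fin n) ℂ} {d : ℕ} (hf : f.IsHomogeneous d)
    (hd : d < 2) : lapP n f = 0 := by
  rw [lapP_apply]
  refine Finset.sum_eq_zero fun j _ => pderiv_eq_zero_of_isHomogeneous_zero j ?_
  simpa [show d - 1 = 0 by omega] using hf.pderiv (i := j)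

lemma lapP_pow_eq_zero_of_isHomogeneous {f : MvPolynomial (Fin n) ℂ} {d p : ℕ}
    (hf : f.IsHomogeneous d) (hd : d < 2 * p) : (lapP n ^ p) f = 0 := by
  induction p generalizing f d with
  | zero => omega
  | succ p ih =>
    rw [pow_succ, Module.End.mul_apply]
    by_cases h : d < 2
    · rw [lapP_eq_zero_of_isHomogeneous hf h, map_zero]
    · exact ih (isHomogeneous_lapP hf) (by omega)

lemma isHomogeneous_nsqPoly (n : ℕ) : (nsqPoly n).IsHomogeneous 2 := by
  rw [← mem_homogeneousSubmodule, nsqPoly]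
  exact Submodule.sum_mem _ fun j _ => (isHomogeneous_X ℂ j).pow 2

lemma nsqPoly_ne_zero (hn : 0 < n) : nsqPoly n ≠ 0 := by
  intro h
  simpa [nsqPoly, hn.ne'] using congrArg (eval fun _ => (1 : ℂ)) h

lemma fischerInner_nsqPoly_pow_mul (p : ℕ) (f g : MvPolynomial (Fin n) ℂ) :
    fischerInner (nsqPoly n ^ p * f) g = fischerInner f ((lapP n ^ p) g) := by
  induction p generalizing f g with
  | zero => simp
  | succ p ih =>
    have hnsq : ∀ g, fischerInner (nsqPoly n * f) g = fischerInner f (lapP n g) := fun g => by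
      simp only [nsqPoly, Finset.sum_mul, pow_two, mul_assoc, fischerInner_sum_left,
        fischerInner_X_mul, lapP_apply, fischerInner_sum_right]
    rw [pow_succ, mul_assoc, ih, hnsq, pow_succ', Module.End.mul_apply]

lemma eq_zero_of_lapP_pow_nsqPoly_pow_mul_eq_zero (hn : 0 < n) {p : ℕ}
    {g : MvPolynomial (Fin n) ℂ} (h : (lapP n ^ p) (nsqPoly n ^ p * g) = 0) : g = 0 := by
  have hself : fischerInner (nsqPoly n ^ p * g) (nsqPoly n ^ p * g) = 0 := by
    rw [fischerInner_nsqPoly_pow_mul, h]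
    simp [fischerInner]
  exact (mul_eq_zero.mp (eq_zero_of_fischerInner_self_eq_zero hself)).resolve_left
    (pow_ne_zero _ (nsqPoly_ne_zero hn))

theorem exists_sub_nsqPoly_pow_mul_mem_Hmp (hn : 0 < n) {p d : ℕ} {f : MvPolynomial (Fin n) ℂ}
    (hf : f.IsHomogeneous (d + 2 * p)) :
    ∃ g : MvPolynomial (Fin n) ℂ,
      g.IsHomogeneous d ∧ f - nsqPoly n ^ p * g ∈ Hmp n (d + 2 * p) p := by
  have hmul : ∀ g : MvPolynomial (Fin n) ℂ, g.IsHomogeneous d →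
      (nsqPoly n ^ p * g).IsHomogeneous (d + 2 * p) := fun g hg => by
    simpa [add_comm] using ((isHomogeneous_nsqPoly n).pow p).mul hg
  let T : homogeneousSubmodule (Fin n) ℂ d →ₗ[ℂ] homogeneousSubmodule (Fin n) ℂ d :=
    ((lapP n ^ p) ∘ₗ LinearMap.mulLeft ℂ (nsqPoly n ^ p)).restrict fun g hg => by
      simpa [mem_homogeneousSubmodule] using isHomogeneous_lapP_pow (hmul g hg) p
  have hT : Function.Surjective T := LinearMap.injective_iff_surjective.mp fun a b hab => by
    refine Subtype.ext (sub_eq_zero.mp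
      (eq_zero_of_lapP_pow_nsqPoly_pow_mul_eq_zero hn (p := p) ?_))
    rw [mul_sub, map_sub, sub_eq_zero]
    simpa [T] using congrArg Subtype.val hab
  obtain ⟨⟨g, hg⟩, hTg⟩ := hT ⟨(lapP n ^ p) f, by
    simpa [mem_homogeneousSubmodule] using isHomogeneous_lapP_pow hf p⟩
  refine ⟨g, hg, hf.sub (hmul g hg), LinearMap.mem_ker.mpr ?_⟩
  rw [map_sub, sub_eq_zero]
  simpa [T] using (congrArg Subtype.val hTg).symm

end Laplacian

lemma eval_nsqPoly_smul_toC {n : ℕ} (c : ℂ) (x : Rn n) :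
    eval (c • toC x) (nsqPoly n) = c ^ 2 * (‖x‖ ^ 2 : ℝ) := by
  simp [nsqPoly, toC, EuclideanSpace.real_norm_sq_eq, mul_pow, Finset.mul_sum]

lemma eval_nsqPoly_pow_of_mem_Shat {n p : ℕ} {z : Cn n} (hz : z ∈ Shat n p) :
    eval z (nsqPoly n ^ p) = 1 := by
  obtain ⟨k, hk, x, hx, rfl⟩ := hz
  have hp : (p : ℂ) ≠ 0 := by exact_mod_cast (Nat.zero_le k).trans_lt hk |>.ne'
  rw [map_pow, eval_nsqPoly_smul_toC, hx, one_pow, Complex.ofReal_one, mul_one, ← pow_mul,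
    ← Complex.exp_nat_mul]
  convert Complex.exp_int_mul_two_pi_mul_I k using 2
  push_cast
  field_simp

def HmpLE (n m p : ℕ) : Submodule ℂ (MvPolynomial (Fin n) ℂ) :=
  ⨆ k ∈ Finset.range (m + 1), Hmp n k p

lemma Hmp_le_HmpLE (n m p : ℕ) : Hmp n m p ≤ HmpLE n m p :=
  le_biSup (fun k => Hmp n k p) (Finset.self_mem_range_succ m)

lemma HmpLE_mono (n p : ℕ) {m m' : ℕ} (h : m ≤ m') : HmpLE n m p ≤ HmpLE n m' p :=
  biSup_mono fun k hk => Finset.mem_range.mpr ((Finset.mem_range.mp hk).trans_le (by omega))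

lemma exists_mem_HmpLE_eqOn_Shat_of_isHomogeneous {n p k : ℕ} (hn : 0 < n) (hp : 0 < p)
    {f : MvPolynomial (Fin n) ℂ} (hf : f.IsHomogeneous k) :
    ∃ h ∈ HmpLE n k p, (Shat n p).EqOn (eval · f) (eval · h) := by
  induction k using Nat.strong_induction_on generalizing f with
  | _ k ih =>
    by_cases hk : k < 2 * p
    · exact ⟨f, Hmp_le_HmpLE n k p ⟨hf, lapP_pow_eq_zero_of_isHomogeneous hf hk⟩, fun _ _ => rfl⟩
    obtain ⟨d, rfl⟩ : ∃ d, k = d + 2 * p := ⟨k - 2 * p, by omega⟩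
    obtain ⟨g, hg, hfg⟩ := exists_sub_nsqPoly_pow_mul_mem_Hmp hn hf
    obtain ⟨h, hh, hgh⟩ := ih d (by omega) hg
    refine ⟨f - nsqPoly n ^ p * g + h,
      add_mem (Hmp_le_HmpLE n _ p hfg) (HmpLE_mono n p (by omega) hh), fun z hz => ?_⟩
    simp [← hgh hz, eval_nsqPoly_pow_of_mem_Shat hz]

lemma exists_mem_HmpLE_eqOn_Shat {n p : ℕ} (hn : 0 < n) (hp : 0 < p)
    (q : MvPolynomial (Fin n) ℂ) :
    ∃ h ∈ HmpLE n q.totalDegree p, (Shat n p).EqOn (eval · q) (eval · h) := by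
  choose! H hH hqH using fun k (_ : k ∈ Finset.range (q.totalDegree + 1)) =>
    exists_mem_HmpLE_eqOn_Shat_of_isHomogeneous hn hp (homogeneousComponent_isHomogeneous k q)
  refine ⟨∑ k ∈ Finset.range (q.totalDegree + 1), H k, Submodule.sum_mem _ fun k hk =>
    HmpLE_mono n p (Nat.lt_succ_iff.mp (Finset.mem_range.mp hk)) (hH k hk), fun z hz => ?_⟩
  conv_lhs => rw [← sum_homogeneousComponent q]
  simp only [map_sum]
  exact Finset.sum_congr rfl fun k hk => hqH k hk hz

/-- on `Ŝ_p`, every polynomial is a finite sum of spherical polyharmonics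
of degrees at most its degree. -/
theorem poly_restriction_sum_spherical (n p m : ℕ) (hn : 0 < n) (hp : 0 < p)
    (q : MvPolynomial (Fin n) ℂ) (hq : q.totalDegree = m) :
    ∃ v : ℕ → MvPolynomial (Fin n) ℂ,
      (∀ k, v k ∈ Hmp n k p) ∧
      ∀ z ∈ Shat n p, MvPolynomial.eval z q =
        ∑ k ∈ Finset.range (m + 1), MvPolynomial.eval z (v k) := by
  obtain ⟨h, hh, hqh⟩ := exists_mem_HmpLE_eqOn_Shat hn hp q
  rw [hq, HmpLE, Submodule.mem_iSup_finset_iff_exists_sum] at hh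
  obtain ⟨v, rfl⟩ := hh
  exact ⟨fun k => v k, fun k => (v k).2, fun z hz => (hqh hz).trans (map_sum _ _ _)⟩

end
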